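/- Let (X, ‖·‖) be a normed space and fix b ∈ [0, ∞); set λ = 1/(b+1). For r ∈ [0, 1) put θ = r(b+1), and for s > 0 let Γ(b, r, s) be the family of all mappings T : X → X such that for all x, y ∈ X: s‖x − Tx‖ ≤ ‖x − y‖ implies ‖b(x − y) + Tx − Ty‖ ≤ θ‖x − y‖. Then the following are equivalent: (i) X is a Banach space (i.e., X is complete); (ii) for every r ∈ [0, 1), every mapping T ∈ Γ(b, r, ψ(r)) has a fixed point; (iii) there exist r ∈ (0, 1) and s ∈ (0, ψ(r)] such that every mapping T ∈ Γ(b, r, s) has a fixed point. -/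

import Mathlib

/-!
Put `F x = (b + 1)⁻¹ • (b • x + T x)`. Then `x - T x = (b + 1) • (x - F x)` and
`b • (x - y) + T x - T y = (b + 1) • (F x - F y)`, so `T ∈ Γ(b, r, s)` says exactly that `F`
satisfies Suzuki's condition `θ d(x, F x) ≤ d(x, y) → d(F x, F y) ≤ r d(x, y)` with
`θ = (b + 1) s`, and `T`, `F` have the same fixed points. For `s = ψ(r)` this `θ` is Suzuki's
constant (`ψ` with `λ = 1`), so (i) ⇒ (ii) is Suzuki's fixed point theorem: the Picard iterates
of `F` converge to some `z`, and `F` pulls every other point towards `z` by the factor `r`. For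
small `r` the orbit of `z` then stays at distance `≥ (1 - r) d(z, F z)` from `z` while tending
to `z`; for large `r` two consecutive Picard steps cannot both violate the hypothesis, so a
subsequence of the iterates tends to `F z`.

For (iii) ⇒ (i), a point `ξ` of the completion outside `X` gives a fixed-point-free map sending
each `x` to a point of `X` much closer to `ξ` than `x`; it satisfies Suzuki's condition for
every `θ, r > 0`, since all distances involved are controlled by the distances to `ξ`.
-/

/-- The function ψ from the paper: ψ(r) = λ on [0, (√5−1)/2],
    λ(1−r)/r² on ((√5−1)/2, 1/√2), and λ/(1+r) on [1/√2, 1). -/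
noncomputable def suzukiPsi (lam r : ℝ) : ℝ :=
  if r ≤ (Real.sqrt 5 - 1) / 2 then lam
  else if r < 1 / Real.sqrt 2 then lam * (1 - r) / r ^ 2
  else lam / (1 + r)

/-- The family Γ(b, r, s) of mappings `T` on `X` such that
    `s‖x − Tx‖ ≤ ‖x − y‖` implies `‖b(x − y) + Tx − Ty‖ ≤ θ‖x − y‖`, where `θ = r(b+1)`. -/
def GammaFamily (X : Type*) [NormedAddCommGroup X] [NormedSpace ℝ X]
    (b r s : ℝ) : Set (X → X) :=
  {T | ∀ x y : X, s * ‖x - T x‖ ≤ ‖x - y‖ →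
    ‖b • (x - y) + T x - T y‖ ≤ (r * (b + 1)) * ‖x - y‖}

open Filter Topology Function

theorem suzukiPsi_eq_mul (lam r : ℝ) : suzukiPsi lam r = lam * suzukiPsi 1 r := by
  unfold suzukiPsi
  split_ifs <;> ring

theorem suzukiPsi_of_le {lam r : ℝ} (hr : r ≤ (Real.sqrt 5 - 1) / 2) : suzukiPsi lam r = lam :=
  if_pos hr

theorem suzukiPsi_one_nonneg {r : ℝ} (hr : r ≤ 1) : 0 ≤ suzukiPsi 1 r := by
  have h2 : 0 < 1 / Real.sqrt 2 := by positivity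
  unfold suzukiPsi
  split_ifs with h₁ h₂
  · exact zero_le_one
  · exact div_nonneg (by linarith) (sq_nonneg r)
  · exact div_nonneg zero_le_one (by linarith)

theorem suzukiPsi_one_cases {r : ℝ} (hr : 0 ≤ r) :
    (suzukiPsi 1 r ≤ 1 ∧ suzukiPsi 1 r * r ^ 2 ≤ 1 - r) ∨ suzukiPsi 1 r * (1 + r) ≤ 1 := by
  have h5 : Real.sqrt 5 ^ 2 = 5 := Real.sq_sqrt (by norm_num)
  have h5' : 0 ≤ Real.sqrt 5 := Real.sqrt_nonneg 5
  unfold suzukiPsi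
  split_ifs with h₁ h₂
  · exact Or.inl ⟨le_rfl, by nlinarith⟩
  · have hr2 : 0 < r ^ 2 := by
      have : 1 ≤ Real.sqrt 5 := by nlinarith
      exact pow_pos (lt_of_le_of_lt (by linarith) (not_le.1 h₁)) 2
    left
    constructor
    · rw [div_le_one hr2]; nlinarith
    · rw [div_mul_cancel₀ _ hr2.ne', one_mul]
  · right
    rw [div_mul_cancel₀ _ (by positivity)]

def SuzukiCondition {X : Type*} [PseudoMetricSpace X] (θ r : ℝ) (F : X → X) : Prop :=
  ∀ x y, θ * dist x (F x) ≤ dist x y → dist (F x) (F y) ≤ r * dist x y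

namespace SuzukiCondition

section PseudoMetric

variable {X : Type*} [PseudoMetricSpace X] {θ r : ℝ} {F : X → X}

theorem dist_apply_apply_le (hF : SuzukiCondition θ r F) (hθ : θ ≤ 1) (x : X) :
    dist (F x) (F (F x)) ≤ r * dist x (F x) :=
  hF x (F x) (mul_le_of_le_one_left dist_nonneg hθ)

theorem dist_iterate_succ_le (hF : SuzukiCondition θ r F) (hr : 0 ≤ r) (hθ : θ ≤ 1) (x : X) :
    ∀ n : ℕ, dist (F^[n] x) (F^[n + 1] x) ≤ r ^ n * dist x (F x)
  | 0 => by simp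
  | n + 1 => by
    rw [iterate_succ_apply' F (n + 1), iterate_succ_apply', pow_succ', mul_assoc]
    calc dist (F (F^[n] x)) (F (F (F^[n] x))) ≤ r * dist (F^[n] x) (F (F^[n] x)) :=
          hF.dist_apply_apply_le hθ _
      _ ≤ r * (r ^ n * dist x (F x)) := by
          rw [← iterate_succ_apply' F n]
          exact mul_le_mul_of_nonneg_left (hF.dist_iterate_succ_le hr hθ x n) hr

theorem cauchySeq_iterate (hF : SuzukiCondition θ r F) (hr0 : 0 ≤ r) (hr1 : r < 1)
    (hθ : θ ≤ 1) (x : X) : CauchySeq fun n ↦ F^[n] x :=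
  cauchySeq_of_le_geometric r (dist x (F x)) hr1 fun n ↦ by
    rw [mul_comm]; exact hF.dist_iterate_succ_le hr0 hθ x n

theorem dist_apply_le_of_tendsto (hF : SuzukiCondition θ r F) (hθ : θ ≤ 1) {x z w : X}
    (hz : Tendsto (fun n ↦ F^[n] x) atTop (𝓝 z)) (hw : 0 < dist z w) :
    dist z (F w) ≤ r * dist z w := by
  have hz' : Tendsto (fun n ↦ F (F^[n] x)) atTop (𝓝 z) := by
    simpa only [iterate_succ_apply'] using (tendsto_add_atTop_iff_nat 1).2 hz
  have hstep : Tendsto (fun n ↦ dist (F^[n] x) (F (F^[n] x))) atTop (𝓝 0) := by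
    simpa using hz.dist hz'
  have hnear : ∀ᶠ n in atTop, θ * dist (F^[n] x) (F (F^[n] x)) ≤ dist (F^[n] x) w := by
    filter_upwards [hstep.eventually_lt (hz.dist tendsto_const_nhds) hw] with n hn
    exact (mul_le_of_le_one_left dist_nonneg hθ).trans hn.le
  exact le_of_tendsto_of_tendsto (hz'.dist tendsto_const_nhds)
    ((hz.dist tendsto_const_nhds).const_mul r) (hnear.mono fun n hn ↦ hF _ _ hn)

theorem dist_apply_le_or_dist_apply_apply_le (hF : SuzukiCondition θ r F) (hr : 0 ≤ r)
    (hθ0 : 0 ≤ θ) (hθr : θ * (1 + r) ≤ 1) (w z : X) :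
    dist (F w) (F z) ≤ r * dist w z ∨ dist (F (F w)) (F z) ≤ r * dist (F w) z := by
  by_contra! ⟨h₁, h₂⟩
  have e₁ : dist w z < θ * dist w (F w) := lt_of_not_ge fun h ↦ h₁.not_ge (hF w z h)
  have e₂ : dist (F w) z < θ * dist (F w) (F (F w)) :=
    lt_of_not_ge fun h ↦ h₂.not_ge (hF (F w) z h)
  have e₃ := hF.dist_apply_apply_le (by nlinarith) w
  nlinarith [dist_triangle_right w (F w) z, dist_nonneg (x := w) (y := F w)]

/-- The first bound is what makes the condition applicable to the pair `(F^[n + 1] z, z)`. -/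
theorem dist_iterate_succ_bounds (hF : SuzukiCondition θ r F) (hr0 : 0 ≤ r) (hr1 : r < 1)
    (hθ0 : 0 ≤ θ) (hθ1 : θ ≤ 1) (hθr : θ * r ^ 2 ≤ 1 - r) {z : X}
    (hz : ∀ w, 0 < dist z w → dist z (F w) ≤ r * dist z w) (ha : 0 < dist z (F z)) :
    ∀ n : ℕ, θ * r ^ (n + 1) * dist z (F z) ≤ dist z (F^[n + 1] z) ∧
      (1 - r) * dist z (F z) ≤ dist z (F^[n + 1] z) ∧
      dist z (F^[n + 1] z) ≤ r ^ n * dist z (F z)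
  | 0 => by
    simp only [zero_add, pow_one, pow_zero, iterate_one, one_mul]
    refine ⟨?_, by nlinarith, le_rfl⟩
    nlinarith [mul_le_one₀ hθ1 hr0 hr1.le]
  | n + 1 => by
    obtain ⟨hθ', hlo, hhi⟩ := hF.dist_iterate_succ_bounds hr0 hr1 hθ0 hθ1 hθr hz ha n
    set a := dist z (F z)
    set y := F^[n + 1] z
    rw [iterate_succ_apply']
    have hpow : r ^ n * a ≤ a := mul_le_of_le_one_left ha.le (pow_le_one₀ hr0 hr1.le)
    have hy : 0 < dist z y := by nlinarith
    have hupper : dist z (F y) ≤ r ^ (n + 1) * a := by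
      calc dist z (F y) ≤ r * dist z y := hz y hy
        _ ≤ r * (r ^ n * a) := mul_le_mul_of_nonneg_left hhi hr0
        _ = r ^ (n + 1) * a := by ring
    have hstep : dist y (F y) ≤ r ^ (n + 1) * a := by
      simpa only [y, iterate_succ_apply' F (n + 1)] using
        hF.dist_iterate_succ_le hr0 hθ1 z (n + 1)
    have hnear : dist (F y) (F z) ≤ r * a := by
      refine (hF y z ?_).trans ?_
      · rw [dist_comm y z]
        nlinarith [mul_le_mul_of_nonneg_left hstep hθ0]
      · rw [dist_comm y z]
        exact mul_le_mul_of_nonneg_left (hhi.trans hpow) hr0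
    have hlower : (1 - r) * a ≤ dist z (F y) := by
      nlinarith [dist_triangle z (F y) (F z)]
    refine ⟨?_, hlower, hupper⟩
    calc θ * r ^ (n + 1 + 1) * a = θ * r ^ 2 * (r ^ n * a) := by ring
      _ ≤ (1 - r) * (r ^ n * a) := mul_le_mul_of_nonneg_right hθr (by positivity)
      _ ≤ (1 - r) * a := mul_le_mul_of_nonneg_left hpow (sub_nonneg.2 hr1.le)
      _ ≤ dist z (F y) := hlower

end PseudoMetric

section Metric

variable {X : Type*} [MetricSpace X] {θ r : ℝ} {F : X → X} {x z : X}

theorem isFixedPt_of_tendsto_of_mul_sq_le (hF : SuzukiCondition θ r F) (hr0 : 0 ≤ r)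
    (hr1 : r < 1) (hθ0 : 0 ≤ θ) (hθ1 : θ ≤ 1) (hθr : θ * r ^ 2 ≤ 1 - r)
    (hz : Tendsto (fun n ↦ F^[n] x) atTop (𝓝 z)) : IsFixedPt F z := by
  by_contra hne
  have ha : 0 < dist z (F z) := dist_pos.2 (Ne.symm hne)
  obtain ⟨n, hn⟩ := exists_pow_lt_of_lt_one (sub_pos.2 hr1) hr1
  obtain ⟨-, hlo, hhi⟩ := hF.dist_iterate_succ_bounds hr0 hr1 hθ0 hθ1 hθr
    (fun w hw ↦ hF.dist_apply_le_of_tendsto hθ1 hz hw) ha n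
  nlinarith

theorem isFixedPt_of_tendsto_of_mul_one_add_le (hF : SuzukiCondition θ r F) (hr : 0 ≤ r)
    (hθ0 : 0 ≤ θ) (hθr : θ * (1 + r) ≤ 1) (hz : Tendsto (fun n ↦ F^[n] x) atTop (𝓝 z)) :
    IsFixedPt F z := by
  have hz' : Tendsto (fun n ↦ F (F^[n] x)) atTop (𝓝 z) := by
    simpa only [iterate_succ_apply'] using (tendsto_add_atTop_iff_nat 1).2 hz
  have hfreq : ∃ᶠ n in atTop, dist (F (F^[n] x)) (F z) ≤ r * dist (F^[n] x) z := by
    refine frequently_atTop.2 fun n ↦ ?_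
    rcases hF.dist_apply_le_or_dist_apply_apply_le hr hθ0 hθr (F^[n] x) z with h | h
    · exact ⟨n, le_rfl, h⟩
    · exact ⟨n + 1, n.le_succ, by simpa only [iterate_succ_apply'] using h⟩
  have hle := le_of_tendsto_of_tendsto_of_frequently (hz'.dist tendsto_const_nhds)
    ((hz.dist tendsto_const_nhds).const_mul r) hfreq
  rw [dist_self, mul_zero] at hle
  exact (dist_le_zero.1 hle).symm

/-- Suzuki's generalization of the Banach contraction principle. -/
theorem exists_isFixedPt [CompleteSpace X] [Nonempty X]
    (hF : SuzukiCondition (suzukiPsi 1 r) r F) (hr0 : 0 ≤ r) (hr1 : r < 1) :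
    ∃ z, IsFixedPt F z := by
  obtain ⟨x₀⟩ := ‹Nonempty X›
  have hθ0 := suzukiPsi_one_nonneg hr1.le
  have hθ1 : suzukiPsi 1 r ≤ 1 := by
    rcases suzukiPsi_one_cases hr0 with h | h
    exacts [h.1, by nlinarith]
  obtain ⟨z, hz⟩ := cauchySeq_tendsto_of_complete (hF.cauchySeq_iterate hr0 hr1 hθ1 x₀)
  rcases suzukiPsi_one_cases hr0 with ⟨-, hθr⟩ | hθr
  · exact ⟨z, hF.isFixedPt_of_tendsto_of_mul_sq_le hr0 hr1 hθ0 hθ1 hθr hz⟩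
  · exact ⟨z, hF.isFixedPt_of_tendsto_of_mul_one_add_le hr0 hθ0 hθr hz⟩

end Metric

end SuzukiCondition

section FixedPointFree

variable {X : Type*} [PseudoMetricSpace X] {θ r : ℝ}

theorem Isometry.exists_suzukiCondition_forall_ne {Y : Type*} [MetricSpace Y] {e : X → Y}
    (he : Isometry e) {ξ : Y} (hξ : ξ ∈ closure (Set.range e)) (hξ' : ξ ∉ Set.range e)
    (hr : 0 < r) (hθ : 0 < θ) : ∃ F : X → X, SuzukiCondition θ r F ∧ ∀ x, F x ≠ x := by
  set f : X → ℝ := fun x ↦ dist (e x) ξ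
  have hf_pos (x : X) : 0 < f x := dist_pos.2 fun h ↦ hξ' ⟨x, h⟩
  have hf_le (x y : X) : f x ≤ f y + dist x y := by
    simpa only [f, he.dist_eq, add_comm] using dist_triangle (e x) (e y) ξ
  have hdist_le (x y : X) : dist x y ≤ f x + f y := by
    simpa only [f, he.dist_eq, dist_comm ξ] using dist_triangle (e x) ξ (e y)
  set α := min (1 / 2 : ℝ) (r * θ / (4 + θ))
  have hα0 : 0 < α := lt_min (by norm_num) (by positivity)
  have hα_half : α ≤ 1 / 2 := min_le_left _ _
  have hα : α * (4 + θ) ≤ r * θ := (le_div_iff₀ (by positivity)).1 (min_le_right _ _)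
  have hcloser (x : X) : ∃ y, f y ≤ α * f x := by
    obtain ⟨y, hy⟩ := Metric.mem_closure_range_iff.1 hξ _ (mul_pos hα0 (hf_pos x))
    exact ⟨y, by rw [dist_comm] at hy; exact hy.le⟩
  choose g hg using hcloser
  refine ⟨g, fun x y hxy ↦ ?_, fun x hx ↦ ?_⟩
  · have h₁ : f x ≤ 2 * dist x (g x) := by
      nlinarith [hf_le x (g x), hg x, mul_le_mul_of_nonneg_right hα_half (hf_pos x).le]
    have h₂ : θ * f x ≤ 2 * dist x y := by nlinarith
    have h₃ : dist (g x) (g y) ≤ α * (2 * f x + dist x y) := by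
      nlinarith [hdist_le (g x) (g y), hg x, hg y, hf_le y x, dist_comm x y]
    refine le_of_mul_le_mul_left ?_ hθ
    nlinarith [mul_le_mul_of_nonneg_right hα (dist_nonneg (x := x) (y := y))]
  · have hgx := hg x
    rw [hx] at hgx
    nlinarith [hf_pos x]

theorem exists_suzukiCondition_forall_ne_of_not_completeSpace (hX : ¬CompleteSpace X)
    (hr : 0 < r) (hθ : 0 < θ) : ∃ F : X → X, SuzukiCondition θ r F ∧ ∀ x, F x ≠ x := by
  have hrange : Set.range ((↑) : X → UniformSpace.Completion X) ≠ Set.univ := fun h ↦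
    hX <| (completeSpace_iff_isComplete_range
      (UniformSpace.Completion.isUniformInducing_coe X)).2 (h ▸ isComplete_univ)
  obtain ⟨ξ, hξ⟩ := (Set.ne_univ_iff_exists_notMem _).1 hrange
  exact UniformSpace.Completion.coe_isometry.exists_suzukiCondition_forall_ne
    (by simp [UniformSpace.Completion.denseRange_coe.closure_range]) hξ hr hθ

end FixedPointFree

section Averaging

variable {X : Type*} [NormedAddCommGroup X] [NormedSpace ℝ X] {b r s : ℝ} {T F : X → X}

theorem mem_gammaFamily_iff_suzukiCondition (hb : 0 < b + 1)
    (hTF : ∀ x, T x = (b + 1) • F x - b • x) :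
    T ∈ GammaFamily X b r s ↔ SuzukiCondition (s * (b + 1)) r F := by
  have hsub (x : X) : ‖x - T x‖ = (b + 1) * ‖x - F x‖ := by
    rw [hTF, show x - ((b + 1) • F x - b • x) = (b + 1) • (x - F x) by module, norm_smul,
      Real.norm_of_nonneg hb.le]
  have hdiff (x y : X) : ‖b • (x - y) + T x - T y‖ = (b + 1) * ‖F x - F y‖ := by
    rw [hTF, hTF, show b • (x - y) + ((b + 1) • F x - b • x) - ((b + 1) • F y - b • y) =
      (b + 1) • (F x - F y) by module, norm_smul, Real.norm_of_nonneg hb.le]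
  simp only [GammaFamily, SuzukiCondition, Set.mem_ofPred_eq, dist_eq_norm, hsub, hdiff]
  refine forall₂_congr fun x y ↦ ?_
  rw [← mul_assoc s, mul_comm r (b + 1), mul_assoc (b + 1), mul_le_mul_iff_right₀ hb]

theorem apply_eq_self_iff_of_eq_smul_sub (hb : b + 1 ≠ 0)
    (hTF : ∀ x, T x = (b + 1) • F x - b • x) (x : X) : T x = x ↔ F x = x := by
  rw [hTF, sub_eq_iff_eq_add, show x + b • x = (b + 1) • x by module, smul_right_inj hb]

end Averaging

theorem stmt_4 {X : Type*} [NormedAddCommGroup X] [NormedSpace ℝ X]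
    (b : ℝ) (hb : 0 ≤ b) :
    List.TFAE
      [CompleteSpace X,
       ∀ r ∈ Set.Ico (0 : ℝ) 1,
         ∀ T ∈ GammaFamily X b r (suzukiPsi (1 / (b + 1)) r), ∃ p : X, T p = p,
       ∃ r ∈ Set.Ioo (0 : ℝ) 1, ∃ s ∈ Set.Ioc (0 : ℝ) (suzukiPsi (1 / (b + 1)) r),
         ∀ T ∈ GammaFamily X b r s, ∃ p : X, T p = p] := by
  have hb1 : 0 < b + 1 := by linarith
  tfae_have 1 → 2 := by
    intro _ r hr T hT
    set F : X → X := fun x ↦ (b + 1)⁻¹ • (b • x + T x)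
    have hTF (x : X) : T x = (b + 1) • F x - b • x := by
      simp only [F, smul_inv_smul₀ hb1.ne', add_sub_cancel_left]
    have hF := (mem_gammaFamily_iff_suzukiCondition hb1 hTF).1 hT
    rw [suzukiPsi_eq_mul, one_div, mul_right_comm, inv_mul_cancel₀ hb1.ne', one_mul] at hF
    obtain ⟨z, hz⟩ := hF.exists_isFixedPt hr.1 hr.2
    exact ⟨z, (apply_eq_self_iff_of_eq_smul_sub hb1.ne' hTF z).2 hz⟩
  tfae_have 2 → 3 := by
    intro h
    have hhalf : (1 / 2 : ℝ) ≤ (Real.sqrt 5 - 1) / 2 := by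
      have : (2 : ℝ) ≤ Real.sqrt 5 := Real.le_sqrt_of_sq_le (by norm_num)
      linarith
    refine ⟨1 / 2, by norm_num, _, ⟨?_, le_rfl⟩, h _ ⟨by norm_num, by norm_num⟩⟩
    rw [suzukiPsi_of_le hhalf]
    positivity
  tfae_have 3 → 1 := by
    rintro ⟨r, hr, s, hs, hfix⟩
    by_contra hX
    obtain ⟨F, hF, hF_ne⟩ :=
      exists_suzukiCondition_forall_ne_of_not_completeSpace hX hr.1 (mul_pos hs.1 hb1)
    obtain ⟨p, hp⟩ := hfix (fun x ↦ (b + 1) • F x - b • x)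
      ((mem_gammaFamily_iff_suzukiCondition hb1 fun _ ↦ rfl).2 hF)
    exact hF_ne p ((apply_eq_self_iff_of_eq_smul_sub hb1.ne' (fun _ ↦ rfl) p).1 hp)
  tfae_finish
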